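/- The two expressions ∑_σ a_{σ1} ∑_{k=1}^n Θ(a_{σ1}+...+a_{σk}) and ∑_σ ∑_{ℓ=1}^n (1/ℓ) max(0, a_{σ1}+...+a_{σℓ}) are equal for any real numbers a_1,...,a_n, where σ ranges over all permutations of {1,...,n}. -/

import Mathlib

open Finset

/-! Fix `k` and write `S σ` for the `k`-th partial sum `a (σ 0) + ⋯ + a (σ (k-1))`. Precomposing `σ`
with the transposition of two positions `i, j < k` leaves `S σ` unchanged, so after reindexing
`∑ σ, a (σ i) * Θ (S σ)` does not depend on `i < k`. Averaging over the `k` positions gives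
`k * ∑ σ, a (σ 0) * Θ (S σ) = ∑ σ, S σ * Θ (S σ) = ∑ σ, max 0 (S σ)`, and summing over `k` gives the
identity. -/

section PermSum

variable {ι R : Type*} [Fintype ι] [DecidableEq ι] [NonUnitalNonAssocSemiring R]
  {s : Finset ι} {i j : ι}

theorem sum_perm_apply_mul_eq_of_mem (a : ι → R) (g : R → R) (hi : i ∈ s) (hj : j ∈ s) :
    ∑ σ : Equiv.Perm ι, a (σ i) * g (∑ k ∈ s, a (σ k))
      = ∑ σ : Equiv.Perm ι, a (σ j) * g (∑ k ∈ s, a (σ k)) := by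
  have hswap : ∀ σ : Equiv.Perm ι,
      ∑ k ∈ s, a ((σ * Equiv.swap i j) k) = ∑ k ∈ s, a (σ k) := fun σ =>
    Equiv.Perm.sum_comp (Equiv.swap i j) s (a ∘ σ) fun x hx =>
      (Equiv.swap_apply_ne_self_iff.mp hx).2.elim (fun h => h ▸ hi) fun h => h ▸ hj
  refine Fintype.sum_equiv (Equiv.mulRight (Equiv.swap i j)) _ _ fun σ => ?_
  rw [Equiv.coe_mulRight, hswap, Equiv.Perm.mul_apply, Equiv.swap_apply_right]

theorem card_nsmul_sum_perm_apply_mul (a : ι → R) (g : R → R) (hi : i ∈ s) :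
    #s • ∑ σ : Equiv.Perm ι, a (σ i) * g (∑ k ∈ s, a (σ k))
      = ∑ σ : Equiv.Perm ι, (∑ k ∈ s, a (σ k)) * g (∑ k ∈ s, a (σ k)) := by
  calc #s • ∑ σ : Equiv.Perm ι, a (σ i) * g (∑ k ∈ s, a (σ k))
      = ∑ j ∈ s, ∑ σ : Equiv.Perm ι, a (σ j) * g (∑ k ∈ s, a (σ k)) := by
        rw [← Finset.sum_const]
        exact Finset.sum_congr rfl fun j hj => sum_perm_apply_mul_eq_of_mem a g hi hj
    _ = _ := by
        rw [Finset.sum_comm]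
        simp only [Finset.sum_mul]

end PermSum

theorem mul_ite_nonneg_eq_max {R : Type*} [Semiring R] [LinearOrder R] (x : R) :
    x * (if 0 ≤ x then 1 else 0) = max 0 x := by
  split_ifs with hx
  · rw [mul_one, max_eq_right hx]
  · rw [mul_zero, max_eq_left (le_of_not_ge hx)]

theorem sum_perm_apply_zero_mul_ite_nonneg_prefix {n k : ℕ} (hn : 0 < n) (hk : 0 < k)
    (hkn : k ≤ n) (a : Fin n → ℝ) :
    ∑ σ : Equiv.Perm (Fin n),
        a (σ ⟨0, hn⟩) * (if 0 ≤ ∑ j ∈ {j : Fin n | (j : ℕ) < k}, a (σ j) then (1 : ℝ) else 0)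
      = ∑ σ : Equiv.Perm (Fin n),
          (1 / (k : ℝ)) * max 0 (∑ j ∈ {j : Fin n | (j : ℕ) < k}, a (σ j)) := by
  have hcard : #{j : Fin n | (j : ℕ) < k} = k := by
    rw [Fin.card_filter_val_lt, min_eq_right hkn]
  have hzero : (⟨0, hn⟩ : Fin n) ∈ ({j : Fin n | (j : ℕ) < k} : Finset (Fin n)) := by
    simpa using hk
  have key := card_nsmul_sum_perm_apply_mul a (fun x => if 0 ≤ x then (1 : ℝ) else 0) hzero
  simp only [hcard, nsmul_eq_mul, mul_ite_nonneg_eq_max] at key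
  rw [← Finset.mul_sum, ← key, ← mul_assoc, one_div, inv_mul_cancel₀ (by positivity), one_mul]

/-- Equality of the right-hand sides of Dyson's identity and Widom's combinatorial lemma. -/
theorem dyson_eq_widom (n : ℕ) (hn : 0 < n) (a : Fin n → ℝ) :
    ∑ σ : Equiv.Perm (Fin n),
      a (σ ⟨0, hn⟩) *
        ∑ k ∈ Finset.Icc 1 n,
          (if 0 ≤ ∑ j ∈ Finset.univ.filter (fun j : Fin n => (j : ℕ) < k), a (σ j)
            then (1 : ℝ) else 0)
    = ∑ σ : Equiv.Perm (Fin n),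
        ∑ ℓ ∈ Finset.Icc 1 n,
          (1 / (ℓ : ℝ)) *
            max 0 (∑ j ∈ Finset.univ.filter (fun j : Fin n => (j : ℕ) < ℓ), a (σ j)) := by
  simp_rw [Finset.mul_sum]
  rw [Finset.sum_comm, Finset.sum_comm (s := Finset.univ)]
  refine Finset.sum_congr rfl fun k hk => ?_
  obtain ⟨hk1, hkn⟩ := Finset.mem_Icc.mp hk
  exact sum_perm_apply_zero_mul_ite_nonneg_prefix hn hk1 hkn a
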